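/- With the Lévy–Khintchine data (μ, c, K) and κ as defined (in particular σ² := c + ∫x² K(dx) > 0), there exists c₂ > 0 such that κ(λ,2) − 2κ(λ,1) > c₂ for every λ ∈ [0,1]. -/
import Mathlib

open MeasureTheory Complex Set

/-- Cumulant generating function `κ(λ, z)` of the interpolating family. -/
noncomputable def kappa (μ c : ℝ) (K : Measure ℝ) (lam : ℝ) (z : ℂ) : ℂ :=
  if lam = 0 then (μ : ℂ) * z + (((c + ∫ x : ℝ, x ^ 2 ∂K) : ℝ) : ℂ) / 2 * z ^ 2
  else (μ : ℂ) * z + (c : ℂ) / 2 * z ^ 2 +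
    ((lam : ℂ) ^ 2)⁻¹ *
      ∫ x : ℝ, (Complex.exp ((lam : ℂ) * z * (x : ℂ)) - 1 - (lam : ℂ) * z * (x : ℂ)) ∂K

noncomputable def kbar (μ c : ℝ) (K : Measure ℝ) (lam : ℝ) (y z : ℂ) : ℂ :=
  kappa μ c K lam (y + z) - kappa μ c K lam y - kappa μ c K lam z

noncomputable def gamLK (μ c : ℝ) (K : Measure ℝ) (lam : ℝ) (z : ℂ) : ℂ :=
  kbar μ c K lam z 1 / kbar μ c K lam 1 1

noncomputable def etaLK (μ c : ℝ) (K : Measure ℝ) (lam : ℝ) (z : ℂ) : ℂ :=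
  kappa μ c K lam z - kappa μ c K lam 1 * gamLK μ c K lam z

/- ### Auxiliary real inequalities -/

lemma aux_one_sub_exp_neg (t : ℝ) (ht : 0 ≤ t) : min 1 t / 2 ≤ 1 - Real.exp (-t) := by
  have h1 : t + 1 ≤ Real.exp t := Real.add_one_le_exp t
  have h2 : Real.exp (-t) * Real.exp t = 1 := by rw [← Real.exp_add]; simp
  have h3 : (0:ℝ) < Real.exp t := Real.exp_pos t
  rcases le_total t 1 with h | h
  · rw [min_eq_right h]
    nlinarith
  · rw [min_eq_left h]
    have h4 : Real.exp 1 ≤ Real.exp t := Real.exp_le_exp.mpr h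
    have h5 : (2:ℝ) ≤ Real.exp 1 := by
      have := Real.add_one_le_exp 1; linarith
    nlinarith

lemma aux_abs_exp_sub_one (lam x : ℝ) (h0 : 0 < lam) (h1 : lam ≤ 1) :
    lam / 2 * min 1 |x| ≤ |Real.exp (lam * x) - 1| := by
  rcases le_or_gt 0 x with hx | hx
  · have hxx : |x| = x := _root_.abs_of_nonneg hx
    have h1e : lam * x + 1 ≤ Real.exp (lam * x) := Real.add_one_le_exp _
    have h2e : 0 ≤ Real.exp (lam * x) - 1 := by nlinarith [mul_nonneg h0.le hx]
    rw [_root_.abs_of_nonneg h2e, hxx]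
    have : min 1 x ≤ x := min_le_right _ _
    have hmn : 0 ≤ min 1 x := le_min one_pos.le hx
    nlinarith
  · have hxx : |x| = -x := _root_.abs_of_neg hx
    have hlx : lam * x ≤ 0 := by nlinarith
    have hle1 : Real.exp (lam * x) ≤ 1 := Real.exp_le_one_iff.mpr hlx
    rw [_root_.abs_of_nonpos (by linarith : Real.exp (lam * x) - 1 ≤ 0)]
    have key := aux_one_sub_exp_neg (lam * (-x)) (by nlinarith)
    have : Real.exp (lam * x) = Real.exp (-(lam * (-x))) := by ring_nf
    rw [this]
    have hmin : lam * min 1 |x| ≤ min 1 (lam * (-x)) := by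
      refine le_min ?_ ?_
      · have : min 1 |x| ≤ 1 := min_le_left _ _
        nlinarith
      · have : min 1 |x| ≤ |x| := min_le_right _ _
        rw [hxx] at this ⊢
        nlinarith
    linarith [key, (by linarith : lam * min 1 |x| / 2 ≤ min 1 (lam * (-x)) / 2)]

lemma min_sq (x : ℝ) : (min 1 |x|) ^ 2 = min 1 (x ^ 2) := by
  rcases le_total |x| 1 with h | h
  · rw [min_eq_right h, _root_.sq_abs, min_eq_right]
    nlinarith [abs_nonneg x, _root_.sq_abs x]
  · rw [min_eq_left h, min_eq_left]
    · ring
    · nlinarith [abs_nonneg x, _root_.sq_abs x]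

lemma aux_sq_lower (lam x : ℝ) (h0 : 0 < lam) (h1 : lam ≤ 1) :
    lam ^ 2 / 4 * min 1 (x ^ 2) ≤ (Real.exp (lam * x) - 1) ^ 2 := by
  have h := aux_abs_exp_sub_one lam x h0 h1
  have hnn : 0 ≤ lam / 2 * min 1 |x| := by
    have : (0:ℝ) ≤ min 1 |x| := le_min one_pos.le (abs_nonneg x)
    positivity
  have := mul_self_le_mul_self hnn h
  calc lam ^ 2 / 4 * min 1 (x ^ 2) = (lam / 2 * min 1 |x|) * (lam / 2 * min 1 |x|) := by
        rw [← min_sq]; ring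
    _ ≤ |Real.exp (lam * x) - 1| * |Real.exp (lam * x) - 1| := this
    _ = (Real.exp (lam * x) - 1) ^ 2 := by rw [← _root_.abs_mul, _root_.abs_mul_self]; ring

/-- The dominating function. -/
noncomputable def domF (x : ℝ) : ℝ :=
  40 * min 1 (x ^ 2) + 3 * Set.indicator {x : ℝ | 1 ≤ |x|} (fun x => Real.exp (2 * x) + |x| ^ 5) x

lemma indicator_nonneg' (x : ℝ) :
    0 ≤ Set.indicator {x : ℝ | 1 ≤ |x|} (fun x => Real.exp (2 * x) + |x| ^ 5) x := by
  apply Set.indicator_nonneg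
  intro y _
  positivity

lemma aux_dom (t x : ℝ) (ht0 : 0 ≤ t) (ht2 : t ≤ 2) :
    Real.exp (t * x) - 1 - t * x ≤ domF x := by
  have hind := indicator_nonneg' x
  have hminn : 0 ≤ min 1 (x ^ 2) := le_min one_pos.le (sq_nonneg x)
  rcases le_or_gt (|x|) 1 with hx1 | hx1
  · have hmin : min 1 (x ^ 2) = x ^ 2 := min_eq_right (by nlinarith [_root_.sq_abs x, abs_nonneg x])
    rcases le_or_gt (|x|) (1/2) with hx2 | hx2
    · -- |x| ≤ 1/2 : use quadratic bound
      have habs : |t * x| ≤ 1 := by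
        rw [_root_.abs_mul, _root_.abs_of_nonneg ht0]
        nlinarith [abs_nonneg x]
      have hb := Real.abs_exp_sub_one_sub_id_le habs
      have : Real.exp (t * x) - 1 - t * x ≤ (t * x) ^ 2 := le_trans (le_abs_self _) hb
      have hsq : (t * x) ^ 2 ≤ 4 * x ^ 2 := by nlinarith [mul_nonneg (by nlinarith : (0:ℝ) ≤ 4 - t ^ 2) (sq_nonneg x)]
      unfold domF
      rw [hmin] at *
      nlinarith
    · -- 1/2 < |x| ≤ 1 : crude bound
      have h8 : Real.exp (t * x) ≤ 8 := by
        have h1 : t * x ≤ 2 := by nlinarith [le_abs_self x, abs_nonneg x]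
        have := Real.exp_le_exp.mpr h1
        have he : Real.exp 2 ≤ 8 := by
          have h9 : Real.exp 1 < 2.7182818286 := Real.exp_one_lt_d9
          have : Real.exp 2 = Real.exp 1 * Real.exp 1 := by
            rw [← Real.exp_add]; norm_num
          nlinarith [Real.exp_pos 1]
        linarith
      have htx : -(t * x) ≤ 2 := by nlinarith [neg_abs_le x, abs_nonneg x]
      have hq : (1:ℝ)/4 ≤ min 1 (x ^ 2) := by
        rw [hmin]; nlinarith [_root_.sq_abs x]
      unfold domF
      nlinarith
  · -- 1 < |x| : indicator active
    have hxS : x ∈ {x : ℝ | 1 ≤ |x|} := le_of_lt hx1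
    have hindval : Set.indicator {x : ℝ | 1 ≤ |x|} (fun x => Real.exp (2 * x) + |x| ^ 5) x
        = Real.exp (2 * x) + |x| ^ 5 := Set.indicator_of_mem hxS _
    unfold domF
    rw [hindval]
    have h5 : |x| ≤ |x| ^ 5 := by
      calc |x| = |x| ^ 1 := (pow_one _).symm
      _ ≤ |x| ^ 5 := pow_le_pow_right₀ (le_of_lt hx1) (by norm_num)
    rcases le_or_gt 0 x with hx | hx
    · have : Real.exp (t * x) ≤ Real.exp (2 * x) := Real.exp_le_exp.mpr (by nlinarith)
      have htxn : 0 ≤ t * x := mul_nonneg ht0 hx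
      nlinarith [Real.exp_pos (2*x), abs_nonneg x]
    · have h1 : Real.exp (t * x) ≤ 1 := Real.exp_le_one_iff.mpr (by nlinarith)
      have hax : |x| = -x := _root_.abs_of_neg hx
      have : -(t * x) = t * |x| := by rw [hax]; ring
      have h2 : -(t * x) ≤ 2 * |x| ^ 5 := by
        rw [this]
        nlinarith [abs_nonneg x]
      have h15 : (1:ℝ) ≤ |x| ^ 5 := by nlinarith [abs_nonneg x]
      nlinarith [Real.exp_pos (2*x)]

lemma aux_nonneg_exp (u : ℝ) : 0 ≤ Real.exp u - 1 - u := by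
  have := Real.add_one_le_exp u; linarith

/-- integrability from finite lintegral for nonneg measurable functions -/
lemma integrable_of_lintegral_ne_top {f : ℝ → ℝ} (K : Measure ℝ) (hm : Measurable f)
    (h0 : ∀ x, 0 ≤ f x) (hfin : ∫⁻ x, ENNReal.ofReal (f x) ∂K ≠ ⊤) : Integrable f K := by
  refine ⟨hm.aestronglyMeasurable, ?_⟩
  rw [hasFiniteIntegral_iff_ofReal (Filter.Eventually.of_forall h0)]
  exact lt_top_iff_ne_top.mpr hfin

/-- `κ(λ,2) − 2κ(λ,1)` is real and uniformly bounded away from zero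
(Lemma `kappaBar11`). -/
theorem kappaBar_one_one_uniformly_positive
    (μ c : ℝ) (hc : 0 ≤ c) (K : MeasureTheory.Measure ℝ)
    (hK0 : K {0} = 0)
    (hKmin : ∫⁻ x : ℝ, ENNReal.ofReal (min 1 (x ^ 2)) ∂K ≠ ⊤)
    (R : ℝ) (hR : R ≠ 0) (a b : ℝ)
    (h0 : (0 : ℝ) ∈ Set.Ioo a b) (h2 : (2 : ℝ) ∈ Set.Ioo a b)
    (h2R : 2 * R ∈ Set.Ioo a b)
    (hK5 : ∫⁻ x in {x : ℝ | 1 ≤ |x|}, ENNReal.ofReal (|x| ^ 5) ∂K ≠ ⊤)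
    (hKexp : ∀ s ∈ Set.Ioo a b,
      ∫⁻ x in {x : ℝ | 1 ≤ |x|}, ENNReal.ofReal (Real.exp (s * x)) ∂K ≠ ⊤)
    (σ2 : ℝ) (hσ2 : σ2 = c + ∫ x : ℝ, x ^ 2 ∂K) (hσ2pos : 0 < σ2)
    :
    ∃ c₂ : ℝ, 0 < c₂ ∧ ∀ lam ∈ Set.Icc (0 : ℝ) 1,
      (kappa μ c K lam 2 - 2 * kappa μ c K lam 1).im = 0 ∧
      c₂ < (kappa μ c K lam 2 - 2 * kappa μ c K lam 1).re := by
  have hSm : MeasurableSet {x : ℝ | 1 ≤ |x|} :=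
    measurableSet_le measurable_const measurable_abs
  -- integrability of min 1 x^2
  have hMin : Integrable (fun x => min 1 (x ^ 2)) K := by
    refine integrable_of_lintegral_ne_top K ?_ (fun x => le_min one_pos.le (sq_nonneg x)) hKmin
    exact measurable_const.min ((measurable_id.pow_const 2))
  set I := ∫ x, min 1 (x ^ 2) ∂K with hIdef
  have hI0 : 0 ≤ I := integral_nonneg (fun x => le_min one_pos.le (sq_nonneg x))
  -- integrability of the indicator pieces
  have hExpInt : Integrable (Set.indicator {x : ℝ | 1 ≤ |x|} (fun x => Real.exp (2 * x))) K := by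
    refine integrable_of_lintegral_ne_top K (Measurable.indicator ?_ hSm)
      (fun x => Set.indicator_nonneg (fun y _ => (Real.exp_pos _).le) x) ?_
    · exact Real.measurable_exp.comp (measurable_const_mul 2)
    · have h2ab := hKexp 2 h2
      rw [← lintegral_indicator hSm] at h2ab
      rw [show (fun x => ENNReal.ofReal
          (Set.indicator {x : ℝ | 1 ≤ |x|} (fun x => Real.exp (2 * x)) x))
          = fun x => Set.indicator {x : ℝ | 1 ≤ |x|}
            (fun x => ENNReal.ofReal (Real.exp (2 * x))) x from ?_]
      · exact h2ab
      · funext x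
        by_cases hx : x ∈ {x : ℝ | 1 ≤ |x|} <;>
          simp [Set.indicator_apply, hx]
  have hX5Int : Integrable (Set.indicator {x : ℝ | 1 ≤ |x|} (fun x => |x| ^ 5)) K := by
    refine integrable_of_lintegral_ne_top K (Measurable.indicator ?_ hSm)
      (fun x => Set.indicator_nonneg (fun y _ => by positivity) x) ?_
    · exact (measurable_abs).pow_const 5
    · rw [← lintegral_indicator hSm] at hK5
      rw [show (fun x => ENNReal.ofReal
          (Set.indicator {x : ℝ | 1 ≤ |x|} (fun x => |x| ^ 5) x))
          = fun x => Set.indicator {x : ℝ | 1 ≤ |x|}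
            (fun x => ENNReal.ofReal (|x| ^ 5)) x from ?_]
      · exact hK5
      · funext x
        by_cases hx : x ∈ {x : ℝ | 1 ≤ |x|} <;>
          simp [Set.indicator_apply, hx]
  -- integrability of the dominating function
  have hDInt : Integrable domF K := by
    unfold domF
    have hindsum : (fun x => Set.indicator {x : ℝ | 1 ≤ |x|}
        (fun x => Real.exp (2 * x) + |x| ^ 5) x)
        = fun x => Set.indicator {x : ℝ | 1 ≤ |x|} (fun x => Real.exp (2 * x)) x
          + Set.indicator {x : ℝ | 1 ≤ |x|} (fun x => |x| ^ 5) x := by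
      funext x
      by_cases hx : x ∈ {x : ℝ | 1 ≤ |x|} <;> simp [Set.indicator_apply, hx]
    simp only [hindsum]
    exact ((hMin.const_mul 40).add (((hExpInt.add hX5Int)).const_mul 3))
  -- integrability of the integrands
  have hInt : ∀ t : ℝ, 0 ≤ t → t ≤ 2 →
      Integrable (fun x => Real.exp (t * x) - 1 - t * x) K := by
    intro t ht0 ht2
    refine Integrable.mono' hDInt ?_ (Filter.Eventually.of_forall fun x => ?_)
    · exact (((Real.measurable_exp.comp (measurable_const_mul t)).sub
        measurable_const).sub (measurable_const_mul t)).aestronglyMeasurable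
    · rw [Real.norm_eq_abs, _root_.abs_of_nonneg (aux_nonneg_exp (t * x))]
      exact aux_dom t x ht0 ht2
  -- x^2 integrable
  have hX2 : Integrable (fun x : ℝ => x ^ 2) K := by
    refine Integrable.mono' (hMin.add hX5Int) ((measurable_id.pow_const 2).aestronglyMeasurable)
      (Filter.Eventually.of_forall fun x => ?_)
    rw [Real.norm_eq_abs, _root_.abs_of_nonneg (sq_nonneg x)]
    rcases le_or_gt (|x|) 1 with hx | hx
    · have hmin : min 1 (x ^ 2) = x ^ 2 := min_eq_right (by nlinarith [_root_.sq_abs x, abs_nonneg x])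
      have := Set.indicator_nonneg (fun (y:ℝ) (_ : y ∈ {x : ℝ | 1 ≤ |x|}) =>
        (by positivity : (0:ℝ) ≤ |y| ^ 5)) x
      simp only [Pi.add_apply]
      linarith [hmin.ge]
    · have hxS : x ∈ {x : ℝ | 1 ≤ |x|} := le_of_lt hx
      simp only [Pi.add_apply]
      rw [Set.indicator_of_mem hxS]
      have h25 : x ^ 2 ≤ |x| ^ 5 := by
        have : x ^ 2 = |x| ^ 2 := (_root_.sq_abs x).symm
        rw [this]
        exact pow_le_pow_right₀ (le_of_lt hx) (by norm_num)
      have : (0:ℝ) ≤ min 1 (x ^ 2) := le_min one_pos.le (sq_nonneg x)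
      linarith
  have hIle : I ≤ ∫ x, x ^ 2 ∂K :=
    integral_mono hMin hX2 (fun x => min_le_right _ _)
  -- c + I > 0
  have hcI : 0 < c + I := by
    by_contra h
    push_neg at h
    have hI0' : I = 0 := le_antisymm (by linarith) hI0
    have hc0 : c = 0 := le_antisymm (by linarith) hc
    have hae : (fun x => min 1 (x ^ 2)) =ᵐ[K] 0 :=
      (integral_eq_zero_iff_of_nonneg (fun x => le_min one_pos.le (sq_nonneg x)) hMin).mp hI0'
    have hae2 : (fun x : ℝ => x ^ 2) =ᵐ[K] 0 := by
      filter_upwards [hae] with x hx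
      simp only [Pi.zero_apply] at hx ⊢
      by_contra hxx
      have h1 : 0 < x ^ 2 := lt_of_le_of_ne (sq_nonneg x) (Ne.symm hxx)
      have := lt_min one_pos h1
      rw [hx] at this
      exact lt_irrefl 0 this
    have : ∫ x, x ^ 2 ∂K = 0 := by
      rw [integral_congr_ae hae2]; simp
    rw [hσ2, this, hc0] at hσ2pos
    simp at hσ2pos
  refine ⟨(c + I / 4) / 2, by nlinarith, ?_⟩
  rintro lam ⟨h0l, h1l⟩
  rcases eq_or_lt_of_le h0l with hl0 | hl0
  · -- lam = 0
    have hl : lam = 0 := hl0.symm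
    subst hl
    have hval : kappa μ c K 0 2 - 2 * kappa μ c K 0 1 = ((σ2 : ℝ) : ℂ) := by
      simp only [kappa, if_pos rfl, hσ2]
      push_cast
      ring
    rw [hval]
    refine ⟨Complex.ofReal_im _, ?_⟩
    rw [Complex.ofReal_re]
    nlinarith
  · -- lam > 0
    have hlam : lam ≠ 0 := ne_of_gt hl0
    have hf1 : Integrable (fun x => Real.exp (lam * x) - 1 - lam * x) K :=
      hInt lam h0l (by linarith)
    have hf2 : Integrable (fun x => Real.exp (2 * lam * x) - 1 - 2 * lam * x) K :=
      hInt (2 * lam) (by linarith) (by linarith)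
    -- complex → real reduction
    have hc2 : (∫ x : ℝ, (Complex.exp ((lam : ℂ) * 2 * x) - 1 - (lam : ℂ) * 2 * x) ∂K)
        = ((∫ x, (Real.exp (2 * lam * x) - 1 - 2 * lam * x) ∂K : ℝ) : ℂ) := by
      rw [show (fun x : ℝ => Complex.exp ((lam : ℂ) * 2 * x) - 1 - (lam : ℂ) * 2 * x)
          = fun x : ℝ => ((Real.exp (2 * lam * x) - 1 - 2 * lam * x : ℝ) : ℂ) from ?_]
      · exact integral_ofReal
      · funext x
        rw [show (lam : ℂ) * 2 * (x : ℂ) = ((2 * lam * x : ℝ) : ℂ) by push_cast; ring,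
          ← Complex.ofReal_exp]
        push_cast
        ring
    have hc1 : (∫ x : ℝ, (Complex.exp ((lam : ℂ) * 1 * x) - 1 - (lam : ℂ) * 1 * x) ∂K)
        = ((∫ x, (Real.exp (lam * x) - 1 - lam * x) ∂K : ℝ) : ℂ) := by
      rw [show (fun x : ℝ => Complex.exp ((lam : ℂ) * 1 * x) - 1 - (lam : ℂ) * 1 * x)
          = fun x : ℝ => ((Real.exp (lam * x) - 1 - lam * x : ℝ) : ℂ) from ?_]
      · exact integral_ofReal
      · funext x
        rw [show (lam : ℂ) * 1 * (x : ℂ) = ((lam * x : ℝ) : ℂ) by push_cast; ring,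
          ← Complex.ofReal_exp]
        push_cast
        ring
    have hred : kappa μ c K lam 2 - 2 * kappa μ c K lam 1
        = ((c + (lam ^ 2)⁻¹ * ((∫ x, (Real.exp (2 * lam * x) - 1 - 2 * lam * x) ∂K)
            - 2 * ∫ x, (Real.exp (lam * x) - 1 - lam * x) ∂K) : ℝ) : ℂ) := by
      simp only [kappa, if_neg hlam]
      rw [hc2, hc1]
      push_cast
      ring
    rw [hred]
    refine ⟨Complex.ofReal_im _, ?_⟩
    rw [Complex.ofReal_re]
    -- combine the two real integrals into the square integral
    have hsq_int : Integrable (fun x => (Real.exp (lam * x) - 1) ^ 2) K := by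
      refine (hf2.sub (hf1.const_mul 2)).congr (Filter.Eventually.of_forall fun x => ?_)
      have hexp2 : Real.exp (2 * lam * x) = Real.exp (lam * x) * Real.exp (lam * x) := by
        rw [← Real.exp_add]; ring_nf
      simp only [Pi.sub_apply]
      rw [hexp2]
      ring
    have hcomb : (∫ x, (Real.exp (2 * lam * x) - 1 - 2 * lam * x) ∂K)
        - 2 * ∫ x, (Real.exp (lam * x) - 1 - lam * x) ∂K
        = ∫ x, (Real.exp (lam * x) - 1) ^ 2 ∂K := by
      rw [← MeasureTheory.integral_const_mul, ← integral_sub hf2 ((hf1).const_mul 2)]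
      refine integral_congr_ae (Filter.Eventually.of_forall fun x => ?_)
      have hexp2 : Real.exp (2 * lam * x) = Real.exp (lam * x) * Real.exp (lam * x) := by
        rw [← Real.exp_add]; ring_nf
      simp only
      rw [hexp2]
      ring
    rw [hcomb]
    -- lower bound on the square integral
    have hmono : lam ^ 2 / 4 * I ≤ ∫ x, (Real.exp (lam * x) - 1) ^ 2 ∂K := by
      rw [hIdef, ← MeasureTheory.integral_const_mul]
      exact integral_mono (hMin.const_mul _) hsq_int
        (fun x => aux_sq_lower lam x hl0 h1l)
    have hlp : 0 < lam ^ 2 := by positivity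
    have hfinal : I / 4 ≤ (lam ^ 2)⁻¹ * ∫ x, (Real.exp (lam * x) - 1) ^ 2 ∂K := by
      calc I / 4 = (lam ^ 2)⁻¹ * (lam ^ 2 / 4 * I) := by
            field_simp
      _ ≤ (lam ^ 2)⁻¹ * ∫ x, (Real.exp (lam * x) - 1) ^ 2 ∂K :=
            mul_le_mul_of_nonneg_left hmono (inv_nonneg.mpr hlp.le)
    nlinarith
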